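/- For any two logics L_1, L_2 from the set {S4, D4, D, T}, the n-product equals the fusion: L_1 ×_n L_2 = L_1 ⊗ L_2. -/

import Mathlib

set_option autoImplicit false

/-- Modal formulas with `n` modalities (propositional letters indexed by `ℕ`). -/
inductive MFormula (n : ℕ) : Type
  | prop : ℕ → MFormula n
  | bot  : MFormula n
  | imp  : MFormula n → MFormula n → MFormula n
  | box  : Fin n → MFormula n → MFormula n

namespace MFormula

/-- Negation as an abbreviation: ¬φ := φ → ⊥. -/
def neg {n : ℕ} (φ : MFormula n) : MFormula n := φ.imp .bot

/-- Uniform substitution of formulas for propositional letters. -/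
def subst {n : ℕ} (s : ℕ → MFormula n) : MFormula n → MFormula n
  | prop p  => s p
  | bot     => bot
  | imp φ ψ => imp (φ.subst s) (ψ.subst s)
  | box i φ => box i (φ.subst s)

end MFormula

/-- A classical tautology: true under every boolean valuation of formulas
(a valuation respecting `⊥` and `→`, arbitrary on letters and boxed formulas). -/
def IsTautology {n : ℕ} (φ : MFormula n) : Prop :=
  ∀ v : MFormula n → Prop,
    ¬ v .bot → (∀ ψ χ : MFormula n, v (ψ.imp χ) ↔ (v ψ → v χ)) → v φ

/-- Normal modal logics with `n` modalities. -/
structure IsNormalLogic {n : ℕ} (L : Set (MFormula n)) : Prop where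
  taut : ∀ φ : MFormula n, IsTautology φ → φ ∈ L
  kax : ∀ (i : Fin n) (p q : MFormula n),
    ((MFormula.box i (p.imp q)).imp ((MFormula.box i p).imp (MFormula.box i q))) ∈ L
  mp : ∀ φ ψ : MFormula n, φ.imp ψ ∈ L → φ ∈ L → ψ ∈ L
  subst : ∀ (φ : MFormula n) (s : ℕ → MFormula n), φ ∈ L → φ.subst s ∈ L
  nec : ∀ (i : Fin n) (φ : MFormula n), φ ∈ L → MFormula.box i φ ∈ L

/-- The smallest normal logic containing `Γ`. -/
def NormalClosure {n : ℕ} (Γ : Set (MFormula n)) : Set (MFormula n) :=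
  ⋂₀ {L : Set (MFormula n) | IsNormalLogic L ∧ Γ ⊆ L}

/-- The axiom □p → ¬□¬p. -/
def dAx : MFormula 1 :=
  (MFormula.box 0 (.prop 0)).imp (MFormula.neg (MFormula.box 0 (MFormula.neg (.prop 0))))

/-- The axiom □p → p. -/
def tAx : MFormula 1 := (MFormula.box 0 (.prop 0)).imp (.prop 0)

/-- The axiom □p → □□p. -/
def fourAx : MFormula 1 :=
  (MFormula.box 0 (.prop 0)).imp (MFormula.box 0 (MFormula.box 0 (.prop 0)))

def LogicK : Set (MFormula 1) := NormalClosure ∅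
def LogicD : Set (MFormula 1) := NormalClosure (LogicK ∪ {dAx})
def LogicT : Set (MFormula 1) := NormalClosure (LogicK ∪ {tAx})
def LogicD4 : Set (MFormula 1) := NormalClosure (LogicD ∪ {fourAx})
def LogicS4 : Set (MFormula 1) := NormalClosure (LogicT ∪ {fourAx})

/-- Translation of a unimodal formula into the bimodal language, replacing □ by □_i. -/
def trTo (i : Fin 2) : MFormula 1 → MFormula 2
  | .prop p  => .prop p
  | .bot     => .bot
  | .imp φ ψ => .imp (trTo i φ) (trTo i ψ)
  | .box _ φ => .box i (trTo i φ)

/-- The fusion `L₁ ⊗ L₂` of two unimodal logics: the smallest bimodal normal logic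
containing the translation of `L₁` (□ ↦ □₁) and of `L₂` (□ ↦ □₂). -/
def Fusion (L₁ L₂ : Set (MFormula 1)) : Set (MFormula 2) :=
  NormalClosure (trTo 0 '' L₁ ∪ trTo 1 '' L₂)

/-- Truth in a Kripke model. -/
def kSat {n : ℕ} {W : Type} (R : Fin n → W → W → Prop) (V : ℕ → Set W) :
    W → MFormula n → Prop
  | w, .prop p  => w ∈ V p
  | _, .bot     => False
  | w, .imp φ ψ => kSat R V w φ → kSat R V w ψ
  | w, .box i φ => ∀ v : W, R i w v → kSat R V v φ

/-- The logic of a Kripke `n`-frame. -/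
def KLogn {n : ℕ} {W : Type} [Nonempty W] (R : Fin n → W → W → Prop) :
    Set (MFormula n) :=
  {φ | ∀ (V : ℕ → Set W) (w : W), kSat R V w φ}

/-- The logic of a unimodal Kripke frame. -/
def KLog {W : Type} [Nonempty W] (R : W → W → Prop) : Set (MFormula 1) :=
  KLogn (fun _ => R)

/-- The logic of a bimodal Kripke frame. -/
def KLog2 {W : Type} [Nonempty W] (R₁ R₂ : W → W → Prop) : Set (MFormula 2) :=
  KLogn ![R₁, R₂]

/-- Truth in a (monotone) neighborhood model: `x ⊨ □_i φ` iff the truth set of `φ`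
belongs to the filter `τ i x`. -/
def nSat {n : ℕ} {X : Type} (τ : Fin n → X → Filter X) (V : ℕ → Set X) :
    X → MFormula n → Prop
  | x, .prop p  => x ∈ V p
  | _, .bot     => False
  | x, .imp φ ψ => nSat τ V x φ → nSat τ V x ψ
  | x, .box i φ => {y | nSat τ V y φ} ∈ τ i x

/-- The logic of a neighborhood `n`-frame. -/
def NLogn {n : ℕ} {X : Type} [Nonempty X] (τ : Fin n → X → Filter X) :
    Set (MFormula n) :=
  {φ | ∀ (V : ℕ → Set X) (x : X), nSat τ V x φ}

/-- The logic of a unimodal neighborhood frame. -/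
def NLog {X : Type} [Nonempty X] (τ : X → Filter X) : Set (MFormula 1) :=
  NLogn (fun _ => τ)

/-- The logic of a neighborhood 2-frame. -/
def NLog2 {X : Type} [Nonempty X] (τ₁ τ₂ : X → Filter X) : Set (MFormula 2) :=
  NLogn ![τ₁, τ₂]

/-- Validity of a unimodal formula in a neighborhood frame. -/
def NValid {X : Type} (τ : X → Filter X) (φ : MFormula 1) : Prop :=
  ∀ (V : ℕ → Set X) (x : X), nSat (fun _ => τ) V x φ

/-- The neighborhood frame `N(F)` of a Kripke frame `F = (W, R)`:
`τ(w)` is the principal filter of `R(w)`. -/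
def nOfK {W : Type} (R : W → W → Prop) (w : W) : Filter W :=
  Filter.principal {v | R w v}

/-- Bounded morphisms between neighborhood frames (with neighborhood functions
indexed by `ι`). -/
def IsNdMorphism {ι X Y : Type} (τ : ι → X → Filter X) (σ : ι → Y → Filter Y)
    (f : X → Y) : Prop :=
  Function.Surjective f ∧
    ∀ (i : ι) (x : X),
      (∀ U ∈ τ i x, f '' U ∈ σ i (f x)) ∧
      (∀ V ∈ σ i (f x), ∃ U ∈ τ i x, f '' U ⊆ V)

/-- First neighborhood function of the product of two neighborhood frames:
`U ∈ τ'_1(x₁,x₂)` iff `∃ V ∈ τ₁ x₁, V × {x₂} ⊆ U`. -/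
def prodTau1 {X₁ X₂ : Type} (τ₁ : X₁ → Filter X₁) (p : X₁ × X₂) :
    Filter (X₁ × X₂) :=
  (τ₁ p.1).map (fun x => (x, p.2))

/-- Second neighborhood function of the product of two neighborhood frames:
`U ∈ τ'_2(x₁,x₂)` iff `∃ V ∈ τ₂ x₂, {x₁} × V ⊆ U`. -/
def prodTau2 {X₁ X₂ : Type} (τ₂ : X₂ → Filter X₂) (p : X₁ × X₂) :
    Filter (X₁ × X₂) :=
  (τ₂ p.2).map (fun y => (p.1, y))

/-- The successor relation on finite sequences: `a R b` iff `b = a·x` for some `x ∈ A`. -/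
def sucRel (A : Type) (a b : List A) : Prop := ∃ x : A, b = a ++ [x]

/-- The four kinds of tree frames: irreflexive/reflexive, non-transitive/transitive. -/
inductive TreeKind : Type
  | inn  -- irreflexive non-transitive: F_in
  | rn   -- reflexive non-transitive: F_rn (reflexive closure)
  | itr  -- irreflexive transitive: F_it (transitive closure)
  | rt   -- reflexive transitive: F_rt (reflexive-transitive closure)

/-- The relation of the tree frame `F_{ξη}[A]` on `A*`. -/
def treeRel (A : Type) : TreeKind → List A → List A → Prop
  | .inn => sucRel A
  | .rn  => fun a b => a = b ∨ sucRel A a b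
  | .itr => Relation.TransGen (sucRel A)
  | .rt  => Relation.ReflTransGen (sucRel A)

/-- First relation of the product frame `F₁ ⊗ F₂` on `(A ⊔ B)*`:
`x R'_1 y` iff `y = x·z` for some `z ∈ A*` with `Λ R₁ z`. -/
def prodRel1 (A B : Type) (k : TreeKind) (x y : List (A ⊕ B)) : Prop :=
  ∃ z : List A, treeRel A k [] z ∧ y = x ++ z.map Sum.inl

/-- Second relation of the product frame `F₁ ⊗ F₂` on `(A ⊔ B)*`. -/
def prodRel2 (A B : Type) (k : TreeKind) (x y : List (A ⊕ B)) : Prop :=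
  ∃ z : List B, treeRel B k [] z ∧ y = x ++ z.map Sum.inr

/-- Pseudo-infinite sequences over `A ∪ {0}` (with `0` modelled by `none`, so
automatically `0 ∉ A`) that are eventually `0`. -/
def PSeq (A : Type) : Type :=
  {α : ℕ → Option A // ∃ N, ∀ k ≥ N, α k = none}

instance {A : Type} : Nonempty (PSeq A) := ⟨⟨fun _ => none, 0, fun _ _ => rfl⟩⟩

/-- `st(α)`: the least `N` such that `α` has only zeros from position `N` on. -/
noncomputable def PSeq.st {A : Type} (α : PSeq A) : ℕ :=
  sInf {N | ∀ k ≥ N, α.1 k = none}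

/-- `f_F(α)`: the finite sequence obtained from `α` by deleting all zeros. -/
noncomputable def PSeq.forget {A : Type} (α : PSeq A) : List A :=
  ((List.range α.st).map α.1).reduceOption

/-- The basic neighborhood `U_k(α)` of `α`, relative to the relation `R` on `A*`:
`{β ∈ X : α|_m = β|_m and f_F(α) R f_F(β)}` where `m = max(k, st(α))`. -/
def Unbhd {A : Type} (R : List A → List A → Prop) (k : ℕ) (α : PSeq A) :
    Set (PSeq A) :=
  {β | (∀ i < max k α.st, α.1 i = β.1 i) ∧ R α.forget β.forget}

/-- The neighborhood function of `N_ω(F)`: `τ(α)` is the filter generated by the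
base `{U_k(α) : k ∈ ℕ}`. -/
noncomputable def nOmega {A : Type} (R : List A → List A → Prop) (α : PSeq A) :
    Filter (PSeq A) :=
  ⨅ k : ℕ, Filter.principal (Unbhd R k α)

/-- The interleaving `x₁ y₁ x₂ y₂ …` of two pseudo-infinite sequences. -/
def interleave {A B : Type} (α : PSeq A) (β : PSeq B) : PSeq (A ⊕ B) :=
  ⟨fun n => if n % 2 = 0 then (α.1 (n / 2)).map Sum.inl
            else (β.1 (n / 2)).map Sum.inr, by
    obtain ⟨N₁, h₁⟩ := α.2
    obtain ⟨N₂, h₂⟩ := β.2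
    refine ⟨2 * max N₁ N₂, fun k hk => ?_⟩
    have hdiv : max N₁ N₂ ≤ k / 2 := by omega
    by_cases h : k % 2 = 0
    · simp [h, h₁ (k / 2) (le_trans (le_max_left _ _) hdiv)]
    · simp [h, h₂ (k / 2) (le_trans (le_max_right _ _) hdiv)]⟩

/-- The map `g`: delete all zeros from the interleaving of `α` and `β`. -/
noncomputable def gMap {A B : Type} (p : PSeq A × PSeq B) : List (A ⊕ B) :=
  (interleave p.1 p.2).forget

/-- The n-product `L₁ ×_n L₂`: the bimodal logic of the class of products
`𝔛₁ × 𝔛₂` where `𝔛₁` validates `L₁` and `𝔛₂` validates `L₂`. -/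
def nProduct (L₁ L₂ : Set (MFormula 1)) : Set (MFormula 2) :=
  {φ | ∀ (X₁ X₂ : Type), Nonempty X₁ → Nonempty X₂ →
    ∀ (τ₁ : X₁ → Filter X₁) (τ₂ : X₂ → Filter X₂),
      (∀ ψ ∈ L₁, NValid τ₁ ψ) → (∀ ψ ∈ L₂, NValid τ₂ ψ) →
      ∀ (V : ℕ → Set (X₁ × X₂)) (p : X₁ × X₂),
        nSat ![prodTau1 τ₁, prodTau2 τ₂] V p φ}

/-!
`L₁ ⊗ L₂ ⊆ L₁ ×_n L₂` because each modality of a product frame only looks along its own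
coordinate. Conversely, a formula `φ` outside `L = L₁ ⊗ L₂` fails at a point `x₀` of the
canonical frame of `L`, whose two relations are serial, reflexive or transitive as the axioms
D, T, 4 of `L₁` and `L₂` dictate. Unravelling from `x₀` gives a p-morphism `H` from the tree
product on `(W ⊔ W)*` to this frame, sending the root to `x₀`. The tree product is in turn a bounded-morphic image of the
product `N_ω(F₁) × N_ω(F₂)` of neighborhood frames on eventually-zero sequences, under the map `g`
that erases the zeros of the interleaving: once `k` exceeds the supports of `α` and `β`, `g` maps
the basic neighborhood `U_k(α) × {β}` exactly onto the first-coordinate successors of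
`g (α, β)`, and symmetrically. The `N_ω` frames validate `L₁` and `L₂`, so `φ` fails at the
all-zero point of a product in the class defining `L₁ ×_n L₂`.
-/

def impList {n : ℕ} (Γ : List (MFormula n)) (χ : MFormula n) : MFormula n :=
  Γ.foldr MFormula.imp χ

def IsValuation {n : ℕ} (v : MFormula n → Prop) : Prop :=
  ¬ v .bot ∧ ∀ ψ χ : MFormula n, v (ψ.imp χ) ↔ (v ψ → v χ)

namespace IsValuation

variable {n : ℕ} {v : MFormula n → Prop}

lemma impList_iff (hv : IsValuation v) (Γ : List (MFormula n)) (χ : MFormula n) :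
    v (impList Γ χ) ↔ ((∀ γ ∈ Γ, v γ) → v χ) := by
  induction Γ with
  | nil => simp [impList]
  | cons γ Γ ih =>
    simp only [impList, List.foldr_cons] at ih ⊢
    rw [hv.2, ih, List.forall_mem_cons]
    tauto

lemma neg_iff (hv : IsValuation v) (φ : MFormula n) : v φ.neg ↔ ¬ v φ := by
  rw [MFormula.neg, hv.2]
  exact ⟨fun h hφ => hv.1 (h hφ), fun h hφ => (h hφ).elim⟩

end IsValuation

namespace IsNormalLogic

variable {n : ℕ} {L : Set (MFormula n)}

lemma impList_mem_of_entails (hL : IsNormalLogic L) {Γ : List (MFormula n)} {χ : MFormula n}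
    (h : ∀ v, IsValuation v → (∀ γ ∈ Γ, v γ) → v χ) : impList Γ χ ∈ L :=
  hL.taut _ fun v hb hi => (IsValuation.impList_iff ⟨hb, hi⟩ Γ χ).2 (h v ⟨hb, hi⟩)

lemma mem_of_impList_mem (hL : IsNormalLogic L) {Γ : List (MFormula n)} {χ : MFormula n}
    (h : impList Γ χ ∈ L) (hΓ : ∀ γ ∈ Γ, γ ∈ L) : χ ∈ L := by
  induction Γ with
  | nil => exact h
  | cons γ Γ ih =>
    rw [List.forall_mem_cons] at hΓ
    exact ih (hL.mp _ _ h hΓ.1) hΓ.2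

lemma mem_of_entails (hL : IsNormalLogic L) {Γ : List (MFormula n)} {χ : MFormula n}
    (hΓ : ∀ γ ∈ Γ, γ ∈ L) (h : ∀ v, IsValuation v → (∀ γ ∈ Γ, v γ) → v χ) : χ ∈ L :=
  hL.mem_of_impList_mem (hL.impList_mem_of_entails h) hΓ

lemma box_impList_imp_mem (hL : IsNormalLogic L) (i : Fin n) (Γ : List (MFormula n))
    (χ : MFormula n) :
    (MFormula.box i (impList Γ χ)).imp (impList (Γ.map (.box i)) (.box i χ)) ∈ L := by
  induction Γ with
  | nil => exact hL.taut _ fun v _ hi => (hi _ _).2 id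
  | cons γ Γ ih =>
    refine hL.mem_of_entails (Γ := [_, _]) (by simpa using ⟨hL.kax i γ (impList Γ χ), ih⟩) ?_
    intro v hv hpremises
    simp only [impList, List.foldr_cons, List.map_cons, List.mem_cons, List.not_mem_nil,
      forall_eq_or_imp, hv.2] at hpremises ⊢
    exact fun h hγ => hpremises.2.1 (hpremises.1 h hγ)

lemma impList_map_box_mem (hL : IsNormalLogic L) (i : Fin n) {Γ : List (MFormula n)}
    {χ : MFormula n} (h : impList Γ χ ∈ L) :
    impList (Γ.map (.box i)) (.box i χ) ∈ L :=
  hL.mp _ _ (hL.box_impList_imp_mem i Γ χ) (hL.nec i _ h)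

end IsNormalLogic

section NormalClosure

variable {n : ℕ} {Γ Δ L : Set (MFormula n)}

lemma isNormalLogic_normalClosure (Γ : Set (MFormula n)) : IsNormalLogic (NormalClosure Γ) where
  taut φ hφ _ hS := hS.1.taut φ hφ
  kax i p q _ hS := hS.1.kax i p q
  mp φ ψ h₁ h₂ S hS := hS.1.mp φ ψ (h₁ S hS) (h₂ S hS)
  subst φ s h S hS := hS.1.subst φ s (h S hS)
  nec i φ h S hS := hS.1.nec i φ (h S hS)

lemma subset_normalClosure (Γ : Set (MFormula n)) : Γ ⊆ NormalClosure Γ :=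
  fun _ hφ _ hS => hS.2 hφ

lemma IsNormalLogic.normalClosure_subset (hL : IsNormalLogic L) (h : Γ ⊆ L) :
    NormalClosure Γ ⊆ L :=
  fun _ hφ => hφ L ⟨hL, h⟩

lemma normalClosure_mono (h : Γ ⊆ Δ) : NormalClosure Γ ⊆ NormalClosure Δ :=
  (isNormalLogic_normalClosure Δ).normalClosure_subset (h.trans (subset_normalClosure Δ))

lemma normalClosure_normalClosure_union :
    NormalClosure (NormalClosure Γ ∪ Δ) = NormalClosure (Γ ∪ Δ) := by
  refine subset_antisymm ((isNormalLogic_normalClosure _).normalClosure_subset ?_)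
    (normalClosure_mono (Set.union_subset_union_left Δ (subset_normalClosure Γ)))
  exact Set.union_subset (normalClosure_mono Set.subset_union_left)
    (Set.subset_union_right.trans (subset_normalClosure _))

lemma isNormalLogic_setOf_forall {ι : Sort*} {L : ι → Set (MFormula n)}
    (h : ∀ i, IsNormalLogic (L i)) : IsNormalLogic {φ | ∀ i, φ ∈ L i} where
  taut φ hφ i := (h i).taut φ hφ
  kax j p q i := (h i).kax j p q
  mp φ ψ h₁ h₂ i := (h i).mp φ ψ (h₁ i) (h₂ i)
  subst φ s hφ i := (h i).subst φ s (hφ i)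
  nec j φ hφ i := (h i).nec j φ (hφ i)

end NormalClosure

def IsConsistent {n : ℕ} (L S : Set (MFormula n)) : Prop :=
  ∀ Γ : List (MFormula n), (∀ γ ∈ Γ, γ ∈ S) → impList Γ .bot ∉ L

def IsMaxConsistent {n : ℕ} (L x : Set (MFormula n)) : Prop :=
  IsConsistent L x ∧ ∀ φ : MFormula n, φ ∈ x ∨ φ.neg ∈ x

section Consistency

variable {n : ℕ} {L S : Set (MFormula n)}

lemma IsNormalLogic.exists_impList_neg_of_not_isConsistent_insert (hL : IsNormalLogic L)
    {ψ : MFormula n} (h : ¬ IsConsistent L (insert ψ S)) :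
    ∃ Γ : List (MFormula n), (∀ γ ∈ Γ, γ ∈ S) ∧ impList Γ ψ.neg ∈ L := by
  classical
  simp only [IsConsistent, not_forall, not_not] at h
  obtain ⟨Γ, hΓ, hbot⟩ := h
  refine ⟨Γ.filter (· ∈ S), fun γ hγ => by simpa using (List.mem_filter.1 hγ).2,
    hL.mem_of_entails (Γ := [impList Γ .bot]) (by simpa using hbot) fun v hv h => ?_⟩
  simp only [List.mem_singleton, forall_eq, hv.impList_iff, hv.neg_iff] at h ⊢
  refine fun hS hψ => hv.1 (h fun γ hγ => ?_)
  rcases hΓ γ hγ with rfl | hγS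
  · exact hψ
  · exact hS γ (List.mem_filter.2 ⟨hγ, by simpa using hγS⟩)

lemma IsNormalLogic.exists_isMaxConsistent_superset (hL : IsNormalLogic L)
    (hS : IsConsistent L S) : ∃ x, IsMaxConsistent L x ∧ S ⊆ x := by
  obtain ⟨m, hSm, hm⟩ := zorn_subset_nonempty {T | IsConsistent L T} (fun c hc hchain hne => by
    refine ⟨⋃₀ c, fun Γ hΓ => ?_, fun s hs => Set.subset_sUnion_of_mem hs⟩
    obtain ⟨T, hTc, hT⟩ := hchain.directedOn.exists_mem_subset_of_finite_of_subset_sUnion hne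
      Γ.finite_toSet hΓ
    exact hc hTc Γ hT) S hS
  refine ⟨m, ⟨hm.1, fun φ => ?_⟩, hSm⟩
  by_contra! hφ
  have hinconsistent : ∀ ψ ∉ m, ¬ IsConsistent L (insert ψ m) := fun ψ hψ hcon =>
    hψ (hm.2 hcon (Set.subset_insert ψ m) (Set.mem_insert ψ m))
  obtain ⟨Γ₁, hΓ₁, h₁⟩ := hL.exists_impList_neg_of_not_isConsistent_insert (hinconsistent _ hφ.1)
  obtain ⟨Γ₂, hΓ₂, h₂⟩ := hL.exists_impList_neg_of_not_isConsistent_insert (hinconsistent _ hφ.2)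
  refine hm.1 (Γ₁ ++ Γ₂) (by simpa [or_imp, forall_and] using ⟨hΓ₁, hΓ₂⟩) ?_
  refine hL.mem_of_entails (Γ := [_, _]) (by simpa using ⟨h₁, h₂⟩) fun v hv h => ?_
  simp only [List.forall_mem_cons, hv.impList_iff, hv.neg_iff, List.forall_mem_append] at h ⊢
  tauto

namespace IsMaxConsistent

variable {x : Set (MFormula n)}

lemma mem_of_impList_mem (hL : IsNormalLogic L) (hx : IsMaxConsistent L x)
    {Γ : List (MFormula n)} {χ : MFormula n} (hΓ : ∀ γ ∈ Γ, γ ∈ x) (h : impList Γ χ ∈ L) :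
    χ ∈ x := by
  refine (hx.2 χ).resolve_right fun hχ => hx.1 (Γ ++ [χ.neg]) ?_ ?_
  · simpa only [List.forall_mem_append, List.forall_mem_singleton] using And.intro hΓ hχ
  refine hL.mem_of_entails (Γ := [_]) (by simpa using h) fun v hv h => ?_
  simp only [List.forall_mem_cons, hv.impList_iff, hv.neg_iff, List.forall_mem_append] at h ⊢
  tauto

lemma mem_of_entails (hL : IsNormalLogic L) (hx : IsMaxConsistent L x)
    {Γ : List (MFormula n)} {χ : MFormula n} (hΓ : ∀ γ ∈ Γ, γ ∈ x)
    (h : ∀ v, IsValuation v → (∀ γ ∈ Γ, v γ) → v χ) : χ ∈ x :=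
  hx.mem_of_impList_mem hL hΓ (hL.impList_mem_of_entails h)

lemma mem_of_mem_logic (hL : IsNormalLogic L) (hx : IsMaxConsistent L x) {φ : MFormula n}
    (h : φ ∈ L) : φ ∈ x :=
  hx.mem_of_impList_mem hL (Γ := []) (by simp) h

lemma neg_mem_iff (hL : IsNormalLogic L) (hx : IsMaxConsistent L x) {φ : MFormula n} :
    φ.neg ∈ x ↔ φ ∉ x := by
  refine ⟨fun hneg hφ => hx.1 [φ, φ.neg] (by simpa using ⟨hφ, hneg⟩) ?_, (hx.2 φ).resolve_left⟩
  exact hL.impList_mem_of_entails fun v hv h => by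
    simp only [List.forall_mem_cons, hv.neg_iff] at h
    exact (h.2.1 h.1).elim

lemma imp_mem_iff (hL : IsNormalLogic L) (hx : IsMaxConsistent L x) {φ ψ : MFormula n} :
    φ.imp ψ ∈ x ↔ (φ ∈ x → ψ ∈ x) := by
  refine ⟨fun himp hφ => hx.mem_of_entails hL (Γ := [_, _]) (by simpa using ⟨himp, hφ⟩)
    fun v hv h => by simp only [List.forall_mem_cons, hv.2] at h; exact h.1 h.2.1, fun h => ?_⟩
  by_cases hφ : φ ∈ x
  · exact hx.mem_of_entails hL (Γ := [_]) (by simpa using h hφ) fun v hv h => by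
      simp only [List.forall_mem_cons, hv.2] at h ⊢; exact fun _ => h.1
  · exact hx.mem_of_entails hL (Γ := [_]) (by simpa using (hx.neg_mem_iff hL).2 hφ)
      fun v hv h => by
        simp only [List.forall_mem_cons, hv.neg_iff, hv.2] at h ⊢; exact fun hφ => (h.1 hφ).elim

lemma bot_notMem (hL : IsNormalLogic L) (hx : IsMaxConsistent L x) :
    (MFormula.bot : MFormula n) ∉ x := fun h =>
  hx.1 [.bot] (by simpa using h) (hL.impList_mem_of_entails fun v _ h => h _ (by simp))

end IsMaxConsistent

lemma IsNormalLogic.exists_isMaxConsistent_notMem (hL : IsNormalLogic L) {φ : MFormula n}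
    (hφ : φ ∉ L) : ∃ x, IsMaxConsistent L x ∧ φ ∉ x := by
  have hcon : IsConsistent L {φ.neg} := fun Γ hΓ hbot => hφ <|
    hL.mem_of_entails (Γ := [impList Γ .bot]) (by simpa using hbot) fun v hv h => by
      simp only [List.mem_singleton, forall_eq, hv.impList_iff] at h
      by_contra hvφ
      exact hv.1 (h fun γ hγ => by rw [hΓ γ hγ, hv.neg_iff]; exact hvφ)
  obtain ⟨x, hx, hsub⟩ := hL.exists_isMaxConsistent_superset hcon
  exact ⟨x, hx, (hx.neg_mem_iff hL).1 (hsub rfl)⟩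

end Consistency

abbrev MaxConsistent {n : ℕ} (L : Set (MFormula n)) : Type :=
  {x : Set (MFormula n) // IsMaxConsistent L x}

def canRel {n : ℕ} (L : Set (MFormula n)) (i : Fin n) (x y : MaxConsistent L) : Prop :=
  ∀ χ : MFormula n, MFormula.box i χ ∈ x.1 → χ ∈ y.1

def canVal {n : ℕ} (L : Set (MFormula n)) (p : ℕ) : Set (MaxConsistent L) :=
  {x | MFormula.prop p ∈ x.1}

section Canonical

variable {n : ℕ} {L : Set (MFormula n)}

lemma exists_canRel_notMem (hL : IsNormalLogic L) {i : Fin n} {ψ : MFormula n}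
    {x : MaxConsistent L} (h : MFormula.box i ψ ∉ x.1) : ∃ y, canRel L i x y ∧ ψ ∉ y.1 := by
  have hcon : IsConsistent L (insert ψ.neg {χ | MFormula.box i χ ∈ x.1}) := by
    by_contra hcon
    obtain ⟨Γ, hΓ, hΓψ⟩ := hL.exists_impList_neg_of_not_isConsistent_insert hcon
    refine h (x.2.mem_of_impList_mem hL (List.forall_mem_map.2 hΓ) (hL.impList_map_box_mem i ?_))
    refine hL.mem_of_entails (Γ := [_]) (by simpa using hΓψ) fun v hv h => ?_
    simp only [List.forall_mem_cons, hv.impList_iff, hv.neg_iff, not_not] at h ⊢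
    exact h.1
  obtain ⟨y, hy, hsub⟩ := hL.exists_isMaxConsistent_superset hcon
  exact ⟨⟨y, hy⟩, fun χ hχ => hsub (Or.inr hχ), (hy.neg_mem_iff hL).1 (hsub (Or.inl rfl))⟩

theorem nSat_canonical_iff (hL : IsNormalLogic L) (φ : MFormula n) (x : MaxConsistent L) :
    nSat (fun i => nOfK (canRel L i)) (canVal L) x φ ↔ φ ∈ x.1 := by
  induction φ generalizing x with
  | prop p => rfl
  | bot => exact iff_of_false id (x.2.bot_notMem hL)
  | imp φ ψ ihφ ihψ => simp only [nSat, ihφ, ihψ, x.2.imp_mem_iff hL]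
  | box i φ ih =>
    simp only [nSat, nOfK, Filter.mem_principal, Set.ofPred_subset_ofPred, ih]
    refine ⟨fun h => by_contra fun hφ => ?_, fun h y hy => hy φ h⟩
    obtain ⟨y, hxy, hy⟩ := exists_canRel_notMem hL hφ
    exact hy (h y hxy)

lemma canRel_serial (hL : IsNormalLogic L) {i : Fin n}
    (hD : ∀ χ, (MFormula.box i χ).imp (MFormula.box i χ.neg).neg ∈ L) (x : MaxConsistent L) :
    ∃ y, canRel L i x y := by
  have hbox : MFormula.box i .bot ∉ x.1 := fun hbot =>
    (x.2.neg_mem_iff hL).1 (x.2.mem_of_impList_mem hL (Γ := [_]) (by simpa using hbot) (hD .bot))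
      (x.2.mem_of_mem_logic hL (hL.nec i _ (hL.taut _ fun v _ hi => (hi _ _).2 id)))
  obtain ⟨y, hxy, -⟩ := exists_canRel_notMem hL hbox
  exact ⟨y, hxy⟩

lemma canRel_refl (hL : IsNormalLogic L) {i : Fin n} (hT : ∀ χ, (MFormula.box i χ).imp χ ∈ L)
    (x : MaxConsistent L) : canRel L i x x := fun χ hχ =>
  x.2.mem_of_impList_mem hL (Γ := [_]) (by simpa using hχ) (hT χ)

lemma canRel_trans (hL : IsNormalLogic L) {i : Fin n}
    (h4 : ∀ χ, (MFormula.box i χ).imp (.box i (.box i χ)) ∈ L) {x y z : MaxConsistent L}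
    (hxy : canRel L i x y) (hyz : canRel L i y z) : canRel L i x z := fun χ hχ =>
  hyz χ (hxy _ (x.2.mem_of_impList_mem hL (Γ := [_]) (by simpa using hχ) (h4 χ)))

end Canonical

section NeighborhoodSemantics

variable {n : ℕ} {X : Type}

lemma nSat_subst (τ : Fin n → X → Filter X) (V : ℕ → Set X) (s : ℕ → MFormula n)
    (φ : MFormula n) (x : X) :
    nSat τ V x (φ.subst s) ↔ nSat τ (fun p => {y | nSat τ V y (s p)}) x φ := by
  induction φ generalizing x with
  | prop p => rfl
  | bot => rfl
  | imp φ ψ ihφ ihψ => simp only [MFormula.subst, nSat, ihφ, ihψ]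
  | box i φ ih => simp only [MFormula.subst, nSat, ih]

lemma isNormalLogic_setOf_forall_nSat (τ : Fin n → X → Filter X) :
    IsNormalLogic {φ | ∀ V x, nSat τ V x φ} where
  taut _ hφ V x := hφ (nSat τ V x) id fun _ _ => Iff.rfl
  kax _ _ _ _ _ h₁ h₂ := Filter.mem_of_superset (Filter.inter_mem h₁ h₂) fun _ hy => hy.1 hy.2
  mp _ _ h₁ h₂ V x := h₁ V x (h₂ V x)
  subst φ s h V x := (nSat_subst τ V s φ x).2 (h _ x)
  nec _ _ h V _ := Filter.mem_of_superset Filter.univ_mem fun y _ => h V y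

lemma isNormalLogic_nProduct (L₁ L₂ : Set (MFormula 1)) : IsNormalLogic (nProduct L₁ L₂) :=
  -- one layer per quantifier in the definition of `nProduct`
  isNormalLogic_setOf_forall fun _ => isNormalLogic_setOf_forall fun _ =>
    isNormalLogic_setOf_forall fun _ => isNormalLogic_setOf_forall fun _ =>
    isNormalLogic_setOf_forall fun _ => isNormalLogic_setOf_forall fun _ =>
    isNormalLogic_setOf_forall fun _ => isNormalLogic_setOf_forall fun _ =>
    isNormalLogic_setOf_forall_nSat _

lemma nSat_trTo_zero {X₁ X₂ : Type} (τ₁ : X₁ → Filter X₁) (τ₂ : X₂ → Filter X₂)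
    (V : ℕ → Set (X₁ × X₂)) (φ : MFormula 1) (x₁ : X₁) (x₂ : X₂) :
    nSat ![prodTau1 τ₁, prodTau2 τ₂] V (x₁, x₂) (trTo 0 φ) ↔
      nSat (fun _ => τ₁) (fun p => {a | (a, x₂) ∈ V p}) x₁ φ := by
  induction φ generalizing x₁ with
  | prop p => rfl
  | bot => rfl
  | imp φ ψ ihφ ihψ => simp only [trTo, nSat, ihφ, ihψ]
  | box i φ ih =>
    simp only [trTo, nSat, Matrix.cons_val_zero, prodTau1, Filter.mem_map, Set.preimage_ofPred_eq,
      ih]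

lemma nSat_trTo_one {X₁ X₂ : Type} (τ₁ : X₁ → Filter X₁) (τ₂ : X₂ → Filter X₂)
    (V : ℕ → Set (X₁ × X₂)) (φ : MFormula 1) (x₁ : X₁) (x₂ : X₂) :
    nSat ![prodTau1 τ₁, prodTau2 τ₂] V (x₁, x₂) (trTo 1 φ) ↔
      nSat (fun _ => τ₂) (fun p => {b | (x₁, b) ∈ V p}) x₂ φ := by
  induction φ generalizing x₂ with
  | prop p => rfl
  | bot => rfl
  | imp φ ψ ihφ ihψ => simp only [trTo, nSat, ihφ, ihψ]
  | box i φ ih =>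
    simp only [trTo, nSat, Matrix.cons_val_one, Matrix.cons_val_zero, prodTau2, Filter.mem_map,
      Set.preimage_ofPred_eq, ih]

theorem fusion_subset_nProduct (L₁ L₂ : Set (MFormula 1)) : Fusion L₁ L₂ ⊆ nProduct L₁ L₂ := by
  refine (isNormalLogic_nProduct L₁ L₂).normalClosure_subset ?_
  rintro _ (⟨ψ, hψ, rfl⟩ | ⟨ψ, hψ, rfl⟩) X₁ X₂ - - τ₁ τ₂ h₁ h₂ V ⟨x₁, x₂⟩
  · exact (nSat_trTo_zero τ₁ τ₂ V ψ x₁ x₂).2 (h₁ ψ hψ _ x₁)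
  · exact (nSat_trTo_one τ₁ τ₂ V ψ x₁ x₂).2 (h₂ ψ hψ _ x₂)

/-- `map f (τ i x) = σ i (f x)` is the bounded-morphism condition for filter frames. -/
theorem nSat_comp_iff {Y : Type} {τ : Fin n → X → Filter X} {σ : Fin n → Y → Filter Y}
    {f : X → Y} (hf : ∀ i x, (τ i x).map f = σ i (f x)) (V : ℕ → Set Y) (φ : MFormula n)
    (x : X) : nSat τ (fun p => f ⁻¹' V p) x φ ↔ nSat σ V (f x) φ := by
  induction φ generalizing x with
  | prop p => rfl
  | bot => rfl
  | imp φ ψ ihφ ihψ => simp only [nSat, ihφ, ihψ]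
  | box i φ ih => simp only [nSat, ← hf, Filter.mem_map, Set.preimage_ofPred_eq, ih]

lemma nValid_dAx {τ : X → Filter X} (h : ∀ x, (τ x).NeBot) : NValid τ dAx := fun _ _ h₁ h₂ =>
  have ⟨_, hy₁, hy₂⟩ := Filter.nonempty_of_mem (Filter.inter_mem h₁ h₂)
  hy₂ hy₁

lemma nValid_tAx {τ : X → Filter X} (h : ∀ x, pure x ≤ τ x) : NValid τ tAx := fun _ x hx =>
  Filter.mem_pure.1 (h x hx)

lemma nValid_fourAx {τ : X → Filter X} (h : ∀ x, ∀ U ∈ τ x, {y | U ∈ τ y} ∈ τ x) :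
    NValid τ fourAx := fun _ x hx => h x _ hx

end NeighborhoodSemantics

namespace TreeKind

def axioms : TreeKind → Set (MFormula 1)
  | inn => {dAx}
  | rn  => {tAx}
  | itr => {dAx, fourAx}
  | rt  => {tAx, fourAx}

def closure {α : Type} : TreeKind → (α → α → Prop) → α → α → Prop
  | inn, R => R
  | rn,  R => fun a b => a = b ∨ R a b
  | itr, R => Relation.TransGen R
  | rt,  R => Relation.ReflTransGen R

/-- The frames of `NormalClosure k.axioms`, i.e. of D, T, D4 and S4. -/
def IsFrame (k : TreeKind) {α : Type} (R : α → α → Prop) : Prop :=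
  (∀ a, ∃ b, R a b) ∧ ∀ a b, k.closure R a b → R a b

variable {α β : Type} {R : α → α → Prop}

lemma closure_of_rel (k : TreeKind) {a b : α} (h : R a b) : k.closure R a b := by
  cases k
  exacts [h, Or.inr h, .single h, .single h]

lemma closure_lift (k : TreeKind) {S : β → β → Prop} (f : α → β)
    (hf : ∀ a b, R a b → S (f a) (f b)) {a b : α} (h : k.closure R a b) :
    k.closure S (f a) (f b) := by
  cases k with
  | inn => exact hf a b h
  | rn => exact h.imp (congrArg f) (hf a b)
  | itr => exact Relation.TransGen.lift f hf a b h
  | rt => exact Relation.ReflTransGen.lift f hf a b h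

lemma exists_closure_of_closure_apply (k : TreeKind) {S : β → β → Prop} (f : β → α)
    (hf : ∀ x c, R (f x) c → ∃ y, c = f y ∧ S x y) {x : β} {c : α}
    (h : k.closure R (f x) c) : ∃ y, c = f y ∧ k.closure S x y := by
  cases k with
  | inn => exact hf x c h
  | rn =>
    rcases h with rfl | h
    · exact ⟨x, rfl, Or.inl rfl⟩
    · obtain ⟨y, rfl, hy⟩ := hf x c h
      exact ⟨y, rfl, Or.inr hy⟩
  | itr =>
    induction h with
    | single h =>
      obtain ⟨y, rfl, hy⟩ := hf x _ h
      exact ⟨y, rfl, .single hy⟩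
    | tail _ h ih =>
      obtain ⟨y, rfl, hy⟩ := ih
      obtain ⟨z, rfl, hz⟩ := hf y _ h
      exact ⟨z, rfl, hy.tail hz⟩
  | rt =>
    induction h with
    | refl => exact ⟨x, rfl, .refl⟩
    | tail _ h ih =>
      obtain ⟨y, rfl, hy⟩ := ih
      obtain ⟨z, rfl, hz⟩ := hf y _ h
      exact ⟨z, rfl, hy.tail hz⟩

end TreeKind

lemma treeRel_eq_closure (A : Type) (k : TreeKind) : treeRel A k = k.closure (sucRel A) := by
  cases k <;> rfl

lemma treeRel_nil_singleton {A : Type} (k : TreeKind) (a : A) : treeRel A k [] [a] := by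
  rw [treeRel_eq_closure]
  exact k.closure_of_rel ⟨a, rfl⟩

lemma treeRel_self_append_iff {A : Type} {k : TreeKind} {a t : List A} :
    treeRel A k a (a ++ t) ↔ treeRel A k [] t := by
  rw [treeRel_eq_closure]
  refine ⟨fun h => ?_, fun h => by
    simpa using k.closure_lift (S := sucRel A) (a ++ ·) (fun _ _ ⟨c, hc⟩ => ⟨c, by simp [hc]⟩) h⟩
  obtain ⟨t', ht', h'⟩ := k.exists_closure_of_closure_apply (R := sucRel A) (S := sucRel A)
    (x := []) (a ++ ·) (fun s _ ⟨c, hc⟩ => ⟨s ++ [c], by simp [hc], c, rfl⟩) (by simpa using h)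
  rwa [List.append_cancel_left ht']

lemma isFrame_canRel {L : Set (MFormula 2)} (hL : IsNormalLogic L) {k : TreeKind} {i : Fin 2}
    (hax : ∀ φ ∈ k.axioms, trTo i φ ∈ L) : k.IsFrame (canRel L i) := by
  have hD (h : dAx ∈ k.axioms) := canRel_serial hL fun χ => hL.subst _ (fun _ => χ) (hax _ h)
  have hT (h : tAx ∈ k.axioms) := canRel_refl hL fun χ => hL.subst _ (fun _ => χ) (hax _ h)
  have h4 (h : fourAx ∈ k.axioms) {x y z : MaxConsistent L} :=
    @canRel_trans _ _ hL i (fun χ => hL.subst _ (fun _ => χ) (hax _ h)) x y z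
  cases k with
  | inn => exact ⟨hD rfl, fun _ _ => id⟩
  | rn => exact ⟨fun x => ⟨x, hT rfl x⟩, fun x _ h => h.elim (· ▸ hT rfl x) id⟩
  | itr =>
    refine ⟨hD (Or.inl rfl), fun _ _ h => ?_⟩
    induction h with
    | single h => exact h
    | tail _ h ih => exact h4 (Or.inr rfl) ih h
  | rt =>
    refine ⟨fun x => ⟨x, hT (Or.inl rfl) x⟩, fun x _ h => ?_⟩
    induction h with
    | refl => exact hT (Or.inl rfl) x
    | tail _ h ih => exact h4 (Or.inr rfl) ih h

section Unravel

variable {W : Type}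

open Classical in
noncomputable def stepTo {R : W → W → Prop} (hR : ∀ u, ∃ v, R u v) (u w : W) : W :=
  if R u w then w else (hR u).choose

lemma rel_stepTo {R : W → W → Prop} (hR : ∀ u, ∃ v, R u v) (u w : W) :
    R u (stepTo hR u w) := by
  unfold stepTo
  split_ifs with h
  exacts [h, (hR u).choose_spec]

lemma stepTo_of_rel {R : W → W → Prop} (hR : ∀ u, ∃ v, R u v) {u w : W} (h : R u w) :
    stepTo hR u w = w :=
  if_pos h

lemma image_foldl_stepTo {k : TreeKind} {R : W → W → Prop} (hR : k.IsFrame R) (u : W) :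
    (fun z => z.foldl (stepTo hR.1) u) '' {z | treeRel W k [] z} = {v | R u v} := by
  ext v
  refine ⟨?_, fun hv => ⟨[v], treeRel_nil_singleton k v, stepTo_of_rel hR.1 hv⟩⟩
  rintro ⟨z, hz, rfl⟩
  have hstep (a b : List W) (h : sucRel W a b) :
      R (a.foldl (stepTo hR.1) u) (b.foldl (stepTo hR.1) u) := by
    obtain ⟨c, rfl⟩ := h
    simpa using rel_stepTo hR.1 _ c
  rw [Set.mem_ofPred_eq, treeRel_eq_closure] at hz
  exact hR.2 _ _ (k.closure_lift _ hstep hz)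

theorem exists_unravel {k₁ k₂ : TreeKind} {R₁ R₂ : W → W → Prop} (h₁ : k₁.IsFrame R₁)
    (h₂ : k₂.IsFrame R₂) (r : W) :
    ∃ H : List (W ⊕ W) → W, H [] = r ∧ ∀ x,
      H '' {y | prodRel1 W W k₁ x y} = {v | R₁ (H x) v} ∧
      H '' {y | prodRel2 W W k₂ x y} = {v | R₂ (H x) v} := by
  refine ⟨fun x => x.foldl (fun u c => Sum.elim (stepTo h₁.1 u) (stepTo h₂.1 u) c) r, rfl,
    fun x => ⟨?_, ?_⟩⟩
  · rw [← image_foldl_stepTo h₁]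
    ext v
    simp [prodRel1, List.foldl_map]
  · rw [← image_foldl_stepTo h₂]
    ext v
    simp [prodRel2, List.foldl_map]

end Unravel

namespace PSeq

variable {A B : Type}

lemma st_le_iff {α : PSeq A} {m : ℕ} : α.st ≤ m ↔ ∀ k ≥ m, α.1 k = none :=
  ⟨fun h k hk => Nat.sInf_mem (s := {N | ∀ k ≥ N, α.1 k = none}) α.2 k (h.trans hk),
    fun h => Nat.sInf_le h⟩

lemma forget_eq_flatMap {α : PSeq A} {N : ℕ} (h : α.st ≤ N) :
    α.forget = (List.range N).flatMap fun i => (α.1 i).toList := by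
  obtain ⟨d, rfl⟩ := Nat.exists_eq_add_of_le h
  rw [forget, List.reduceOption, List.filterMap_map, List.filterMap_eq_flatMap_toList,
    List.range_add, List.flatMap_append, List.flatMap_map]
  simp only [Function.id_comp, List.self_eq_append_right, List.flatMap_eq_nil_iff]
  intro j _
  simp [st_le_iff.1 (le_refl α.st) (α.st + j) (by omega)]

lemma forget_eq_append_of_agree {α α' : PSeq A} {m K : ℕ} (hα : α.st ≤ m)
    (hα' : α'.st ≤ m + K) (hag : ∀ i < m, α'.1 i = α.1 i) :
    α'.forget = α.forget ++ (List.range K).flatMap fun j => (α'.1 (m + j)).toList := by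
  rw [forget_eq_flatMap hα', forget_eq_flatMap hα, List.range_add, List.flatMap_append,
    List.flatMap_map]
  congr 1
  exact List.flatMap_congr fun i hi => by rw [hag i (List.mem_range.1 hi)]

def extendSeq (α : PSeq A) (M : ℕ) (z : List A) : PSeq A :=
  ⟨fun i => if i < M then α.1 i else z[i - M]?, M + z.length, fun k hk => by
    simp only [if_neg (show ¬ k < M by omega), List.getElem?_eq_none_iff]
    omega⟩

lemma extendSeq_apply_of_lt (α : PSeq A) {M : ℕ} (z : List A) {i : ℕ} (hi : i < M) :
    (extendSeq α M z).1 i = α.1 i :=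
  if_pos hi

lemma flatMap_range_length_getElem? (z : List A) :
    (List.range z.length).flatMap (fun j => z[j]?.toList) = z := by
  induction z with
  | nil => rfl
  | cons a z ih => simp [List.range_succ_eq_map, List.flatMap_map, ih]

lemma forget_extendSeq {α : PSeq A} {M : ℕ} (hM : α.st ≤ M) (z : List A) :
    (extendSeq α M z).forget = α.forget ++ z := by
  rw [forget_eq_append_of_agree hM (K := z.length) _ fun i hi => extendSeq_apply_of_lt α z hi]
  · congr 1
    convert flatMap_range_length_getElem? z using 3 with j
    simp [extendSeq]
  · exact st_le_iff.2 fun k hk => by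
      simp only [extendSeq, if_neg (show ¬ k < M by omega), List.getElem?_eq_none_iff]
      omega

lemma interleave_two_mul (α : PSeq A) (β : PSeq B) (i : ℕ) :
    (interleave α β).1 (2 * i) = (α.1 i).map Sum.inl := by
  simp [interleave]

lemma interleave_two_mul_add_one (α : PSeq A) (β : PSeq B) (i : ℕ) :
    (interleave α β).1 (2 * i + 1) = (β.1 i).map Sum.inr := by
  simp [interleave, Nat.add_mod, show (2 * i + 1) / 2 = i by omega]

lemma st_interleave_le {α : PSeq A} {β : PSeq B} {N : ℕ} (hα : α.st ≤ N) (hβ : β.st ≤ N) :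
    (interleave α β).st ≤ 2 * N := by
  refine st_le_iff.2 fun k hk => ?_
  obtain ⟨i, rfl | rfl⟩ := Nat.even_or_odd' k
  · simp [interleave_two_mul, st_le_iff.1 hα i (by omega)]
  · simp [interleave_two_mul_add_one, st_le_iff.1 hβ i (by omega)]

lemma flatMap_range_two_mul {C : Type} (f : ℕ → List C) (N : ℕ) :
    (List.range (2 * N)).flatMap f =
      (List.range N).flatMap fun i => f (2 * i) ++ f (2 * i + 1) := by
  induction N with
  | zero => rfl
  | succ N ih =>
    rw [show 2 * (N + 1) = 2 * N + 1 + 1 by ring, List.range_succ, List.range_succ,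
      List.range_succ, List.flatMap_append, List.flatMap_append, List.flatMap_append, ih]
    simp

lemma forget_interleave {α : PSeq A} {β : PSeq B} {N : ℕ} (hα : α.st ≤ N) (hβ : β.st ≤ N) :
    (interleave α β).forget =
      (List.range N).flatMap fun i => (α.1 i).toList.map .inl ++ (β.1 i).toList.map .inr := by
  rw [forget_eq_flatMap (st_interleave_le hα hβ), flatMap_range_two_mul]
  simp [interleave_two_mul, interleave_two_mul_add_one, Option.toList_map]

lemma forget_interleave_eq_append_of_agree {α α' : PSeq A} {β β' : PSeq B} {m K : ℕ}
    (hα : α.st ≤ m) (hβ : β.st ≤ m) (hα' : α'.st ≤ m + K) (hβ' : β'.st ≤ m + K)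
    (hagα : ∀ i < m, α'.1 i = α.1 i) (hagβ : ∀ i < m, β'.1 i = β.1 i) :
    (interleave α' β').forget = (interleave α β).forget ++ (List.range K).flatMap
      fun j => (α'.1 (m + j)).toList.map .inl ++ (β'.1 (m + j)).toList.map .inr := by
  rw [forget_interleave hα' hβ', forget_interleave hα hβ, List.range_add, List.flatMap_append,
    List.flatMap_map]
  congr 1
  exact List.flatMap_congr fun i hi => by
    rw [hagα i (List.mem_range.1 hi), hagβ i (List.mem_range.1 hi)]

def zeros (A : Type) : PSeq A := ⟨fun _ => none, 0, fun _ _ => rfl⟩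

end PSeq

open PSeq

section GMap

variable {A B : Type}

lemma gMap_zeros : gMap (zeros A, zeros B) = [] :=
  forget_interleave (N := 0) (st_le_iff.2 fun _ _ => rfl) (st_le_iff.2 fun _ _ => rfl)

lemma gMap_of_agree_left {α α' : PSeq A} {β : PSeq B} {m : ℕ} (hα : α.st ≤ m)
    (hβ : β.st ≤ m) (hag : ∀ i < m, α'.1 i = α.1 i) :
    ∃ t, α'.forget = α.forget ++ t ∧ gMap (α', β) = gMap (α, β) ++ t.map Sum.inl := by
  refine ⟨_, forget_eq_append_of_agree hα (K := α'.st) (by omega) hag, ?_⟩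
  rw [gMap, gMap, forget_interleave_eq_append_of_agree hα hβ (K := α'.st) (by omega) (by omega)
    hag fun _ _ => rfl, List.map_flatMap]
  congr 1
  exact List.flatMap_congr fun j _ => by simp [st_le_iff.1 hβ (m + j) (by omega)]

lemma gMap_of_agree_right {α : PSeq A} {β β' : PSeq B} {m : ℕ} (hα : α.st ≤ m)
    (hβ : β.st ≤ m) (hag : ∀ i < m, β'.1 i = β.1 i) :
    ∃ t, β'.forget = β.forget ++ t ∧ gMap (α, β') = gMap (α, β) ++ t.map Sum.inr := by
  refine ⟨_, forget_eq_append_of_agree hβ (K := β'.st) (by omega) hag, ?_⟩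
  rw [gMap, gMap, forget_interleave_eq_append_of_agree hα hβ (K := β'.st) (by omega) (by omega)
    (fun _ _ => rfl) hag, List.map_flatMap]
  congr 1
  exact List.flatMap_congr fun j _ => by simp [st_le_iff.1 hα (m + j) (by omega)]

end GMap

section NOmega

variable {A : Type} {R : List A → List A → Prop}

lemma unbhd_antitone (R : List A → List A → Prop) (α : PSeq A) :
    Antitone fun k => Unbhd R k α := fun _ _ hk _ hβ =>
  ⟨fun i hi => hβ.1 i (hi.trans_le (max_le_max_right _ hk)), hβ.2⟩

lemma nOmega_hasBasis (R : List A → List A → Prop) (α : PSeq A) :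
    (nOmega R α).HasBasis (fun _ => True) (Unbhd R · α) :=
  Filter.hasBasis_iInf_principal (unbhd_antitone R α).directed_ge

lemma extendSeq_mem_unbhd {α : PSeq A} {k M : ℕ} (hM : max k α.st ≤ M) {z : List A}
    (hz : R α.forget (α.forget ++ z)) : α.extendSeq M z ∈ Unbhd R k α :=
  ⟨fun _ hi => (extendSeq_apply_of_lt α z (by omega)).symm, by
    rwa [forget_extendSeq (by omega)]⟩

lemma map_nOmega_eq_principal {Y : Type} {f : PSeq A → Y} {S : Set Y} {α : PSeq A} {m : ℕ}
    (h : ∀ k ≥ m, f '' Unbhd R k α = S) : (nOmega R α).map f = Filter.principal S := by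
  ext V
  rw [((nOmega_hasBasis R α).map f).mem_iff, Filter.mem_principal]
  refine ⟨fun ⟨k, _, hk⟩ => ?_, fun hS => ⟨m, trivial, (h m le_rfl).trans_subset hS⟩⟩
  rw [← h (max k m) (le_max_right k m)]
  exact (Set.image_mono (unbhd_antitone R α (le_max_left k m))).trans hk

lemma nOmega_neBot (hR : ∀ w, ∃ t, R w (w ++ t)) (α : PSeq A) : (nOmega R α).NeBot :=
  (nOmega_hasBasis R α).neBot_iff.2 fun _ =>
    have ⟨_, ht⟩ := hR α.forget
    ⟨_, extendSeq_mem_unbhd le_rfl ht⟩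

lemma pure_le_nOmega (hR : ∀ w, R w w) (α : PSeq A) : pure α ≤ nOmega R α := fun _ hU =>
  have ⟨_, _, hk⟩ := (nOmega_hasBasis R α).mem_iff.1 hU
  hk ⟨fun _ _ => rfl, hR _⟩

lemma setOf_mem_nOmega_mem (hR : ∀ a b c, R a b → R b c → R a c) {α : PSeq A} {U : Set (PSeq A)}
    (hU : U ∈ nOmega R α) : {β | U ∈ nOmega R β} ∈ nOmega R α := by
  obtain ⟨k, -, hk⟩ := (nOmega_hasBasis R α).mem_iff.1 hU
  refine (nOmega_hasBasis R α).mem_iff.2 ⟨k, trivial, fun β hβ => ?_⟩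
  refine (nOmega_hasBasis R β).mem_iff.2 ⟨max k α.st, trivial, fun γ hγ => hk ⟨fun i hi => ?_,
    hR _ _ _ hβ.2 hγ.2⟩⟩
  rw [hβ.1 i hi, hγ.1 i (by omega)]

lemma nValid_nOmega_of_mem_axioms [Nonempty A] {k : TreeKind} {φ : MFormula 1}
    (hφ : φ ∈ k.axioms) : NValid (nOmega (treeRel A k)) φ := by
  have hD : NValid (nOmega (treeRel A k)) dAx := nValid_dAx <| nOmega_neBot fun _ =>
    ⟨[Classical.arbitrary A], treeRel_self_append_iff.2 (treeRel_nil_singleton k _)⟩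
  have hT (hrefl : ∀ w, treeRel A k w w) := nValid_tAx (pure_le_nOmega hrefl)
  have h4 (htrans : ∀ a b c, treeRel A k a b → treeRel A k b c → treeRel A k a c) :=
    nValid_fourAx fun _ _ => setOf_mem_nOmega_mem htrans
  cases k with
  | inn => exact hφ ▸ hD
  | rn => exact hφ ▸ hT fun _ => Or.inl rfl
  | itr =>
    rcases hφ with rfl | rfl
    exacts [hD, h4 fun _ _ _ => Relation.TransGen.trans]
  | rt =>
    rcases hφ with rfl | rfl
    exacts [hT fun _ => .refl, h4 fun _ _ _ => Relation.ReflTransGen.trans]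

lemma normalClosure_axioms_subset_nValid [Nonempty A] (k : TreeKind) :
    NormalClosure k.axioms ⊆ {φ | NValid (nOmega (treeRel A k)) φ} :=
  (isNormalLogic_setOf_forall_nSat _).normalClosure_subset fun _ => nValid_nOmega_of_mem_axioms

end NOmega

section GMapBoundedMorphism

variable {A B : Type}

lemma image_unbhd_gMap_left (k : TreeKind) {α : PSeq A} {β : PSeq B} {m : ℕ} (hα : α.st ≤ m)
    (hβ : β.st ≤ m) :
    (fun a => gMap (a, β)) '' Unbhd (treeRel A k) m α = {y | prodRel1 A B k (gMap (α, β)) y} := by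
  have hm : max m α.st = m := max_eq_left hα
  ext y
  constructor
  · rintro ⟨α', ⟨hag, hR⟩, rfl⟩
    obtain ⟨t, ht, hg⟩ := gMap_of_agree_left hα hβ fun i hi => (hag i (by omega)).symm
    rw [ht, treeRel_self_append_iff] at hR
    exact ⟨t, hR, hg⟩
  · rintro ⟨z, hz, rfl⟩
    obtain ⟨t, ht, hg⟩ := gMap_of_agree_left (α' := α.extendSeq m z) hα hβ
      fun _ hi => extendSeq_apply_of_lt α z hi
    rw [forget_extendSeq hα, List.append_cancel_left_eq] at ht
    subst ht
    exact ⟨_, extendSeq_mem_unbhd hm.le (treeRel_self_append_iff.2 hz), hg⟩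

lemma image_unbhd_gMap_right (k : TreeKind) {α : PSeq A} {β : PSeq B} {m : ℕ} (hα : α.st ≤ m)
    (hβ : β.st ≤ m) :
    (fun b => gMap (α, b)) '' Unbhd (treeRel B k) m β = {y | prodRel2 A B k (gMap (α, β)) y} := by
  have hm : max m β.st = m := max_eq_left hβ
  ext y
  constructor
  · rintro ⟨β', ⟨hag, hR⟩, rfl⟩
    obtain ⟨t, ht, hg⟩ := gMap_of_agree_right hα hβ fun i hi => (hag i (by omega)).symm
    rw [ht, treeRel_self_append_iff] at hR
    exact ⟨t, hR, hg⟩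
  · rintro ⟨z, hz, rfl⟩
    obtain ⟨t, ht, hg⟩ := gMap_of_agree_right (β' := β.extendSeq m z) hα hβ
      fun _ hi => extendSeq_apply_of_lt β z hi
    rw [forget_extendSeq hβ, List.append_cancel_left_eq] at ht
    subst ht
    exact ⟨_, extendSeq_mem_unbhd hm.le (treeRel_self_append_iff.2 hz), hg⟩

theorem map_gMap_prodTau1 (k : TreeKind) (p : PSeq A × PSeq B) :
    (prodTau1 (nOmega (treeRel A k)) p).map gMap = nOfK (prodRel1 A B k) (gMap p) :=
  Filter.map_map.trans <| map_nOmega_eq_principal (m := max p.1.st p.2.st) fun _ hm =>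
    image_unbhd_gMap_left k (le_of_max_le_left hm) (le_of_max_le_right hm)

theorem map_gMap_prodTau2 (k : TreeKind) (p : PSeq A × PSeq B) :
    (prodTau2 (nOmega (treeRel B k)) p).map gMap = nOfK (prodRel2 A B k) (gMap p) :=
  Filter.map_map.trans <| map_nOmega_eq_principal (m := max p.1.st p.2.st) fun _ hm =>
    image_unbhd_gMap_right k (le_of_max_le_left hm) (le_of_max_le_right hm)

end GMapBoundedMorphism

lemma exists_eq_normalClosure_axioms {L : Set (MFormula 1)}
    (hL : L ∈ ({LogicS4, LogicD4, LogicD, LogicT} : Set (Set (MFormula 1)))) :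
    ∃ k : TreeKind, L = NormalClosure k.axioms := by
  rcases hL with rfl | rfl | rfl | rfl
  exacts [⟨.rt, by simp only [LogicS4, LogicT, LogicK, normalClosure_normalClosure_union,
      Set.empty_union, Set.singleton_union]; rfl⟩,
    ⟨.itr, by simp only [LogicD4, LogicD, LogicK, normalClosure_normalClosure_union,
      Set.empty_union, Set.singleton_union]; rfl⟩,
    ⟨.inn, by simp only [LogicD, LogicK, normalClosure_normalClosure_union, Set.empty_union]; rfl⟩,
    ⟨.rn, by simp only [LogicT, LogicK, normalClosure_normalClosure_union, Set.empty_union]; rfl⟩]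

theorem nProduct_normalClosure_axioms_eq_fusion (k₁ k₂ : TreeKind) :
    nProduct (NormalClosure k₁.axioms) (NormalClosure k₂.axioms) =
      Fusion (NormalClosure k₁.axioms) (NormalClosure k₂.axioms) := by
  set L := Fusion (NormalClosure k₁.axioms) (NormalClosure k₂.axioms)
  have hL : IsNormalLogic L := isNormalLogic_normalClosure _
  refine (fusion_subset_nProduct _ _).antisymm' fun φ hφ => by_contra fun hφL => ?_
  obtain ⟨x₀, hx₀, hφx₀⟩ := hL.exists_isMaxConsistent_notMem hφL
  have hax₁ : ∀ ψ ∈ k₁.axioms, trTo 0 ψ ∈ L := fun ψ hψ =>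
    subset_normalClosure _ (.inl ⟨ψ, subset_normalClosure _ hψ, rfl⟩)
  have hax₂ : ∀ ψ ∈ k₂.axioms, trTo 1 ψ ∈ L := fun ψ hψ =>
    subset_normalClosure _ (.inr ⟨ψ, subset_normalClosure _ hψ, rfl⟩)
  obtain ⟨H, hH₀, hH⟩ := exists_unravel (isFrame_canRel hL hax₁) (isFrame_canRel hL hax₂)
    (⟨x₀, hx₀⟩ : MaxConsistent L)
  have : Nonempty (MaxConsistent L) := ⟨⟨x₀, hx₀⟩⟩
  have hmap : ∀ i p,
      (![prodTau1 (nOmega (treeRel _ k₁)), prodTau2 (nOmega (treeRel _ k₂))] i p).map (H ∘ gMap) =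
        nOfK (canRel L i) (H (gMap p)) := by
    simp only [Fin.forall_fin_two, ← Filter.map_map, Matrix.cons_val_zero, Matrix.cons_val_one,
      map_gMap_prodTau1, map_gMap_prodTau2, nOfK, Filter.map_principal, hH, implies_true, and_self]
  have hφ₀ := hφ _ _ inferInstance inferInstance _ _ (normalClosure_axioms_subset_nValid k₁)
    (normalClosure_axioms_subset_nValid k₂) (fun p => (H ∘ gMap) ⁻¹' canVal L p) (zeros _, zeros _)
  rw [nSat_comp_iff hmap, Function.comp_apply, gMap_zeros, hH₀, nSat_canonical_iff hL] at hφ₀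
  exact hφx₀ hφ₀

/-- For any `L₁, L₂ ∈ {S4, D4, D, T}`: `L₁ ×_n L₂ = L₁ ⊗ L₂`. -/
theorem nProduct_eq_fusion :
    ∀ L₁ ∈ ({LogicS4, LogicD4, LogicD, LogicT} : Set (Set (MFormula 1))),
    ∀ L₂ ∈ ({LogicS4, LogicD4, LogicD, LogicT} : Set (Set (MFormula 1))),
      nProduct L₁ L₂ = Fusion L₁ L₂ := by
  intro L₁ h₁ L₂ h₂
  obtain ⟨k₁, rfl⟩ := exists_eq_normalClosure_axioms h₁
  obtain ⟨k₂, rfl⟩ := exists_eq_normalClosure_axioms h₂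
  exact nProduct_normalClosure_axioms_eq_fusion k₁ k₂
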